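/- Let χ : ℝ → ℂ belong to the Carleman class C_M{ℝ}, and suppose y ∈ C_M{ℝ} and δ : ℝ → [0,∞) satisfy |y(s) - y(s+1) - χ(s)| ≤ δ(s) for all s ∈ ℝ, where δ is of class C¹ on ℝ. Then there exists z ∈ C_M{ℝ} with z(s) - z(s+1) = χ(s) for all s ∈ ℝ and, for all s ∈ ℝ, |y(s) - z(s)| ≤ (⌈(b-s)⁺⌉ + ⌈(s-a)⁺⌉)·sup_{u ∈ I_s} δ(u) + ((⌈(b-s)⁺⌉ + ⌈(s-a)⁺⌉ - 1)/2)·sup_{u ∈ I_s} |δ'(u)|, where I_s denotes the interval [s - ⌈(s-a)⁺⌉, s + ⌈(b-s)⁺⌉ - 1], x⁺ := max(x,0), and ⌈·⌉ is the ceiling function. -/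

import Mathlib

open Filter Function

/-- The Carleman class `C_M{ℝ}` of smooth functions `f : ℝ → ℂ` whose derivatives satisfy
`‖f⁽ⁿ⁾‖ ≤ C_K ρ_K^n M_n` on every compact interval `K`. -/
noncomputable def CarlemanClass (M : ℕ → ℝ) : Set (ℝ → ℂ) :=
  {f | ContDiff ℝ (⊤ : ℕ∞) f ∧ ∀ α β : ℝ, ∃ C ρ : ℝ, 0 < C ∧ 0 < ρ ∧
    ∀ n : ℕ, ∀ x ∈ Set.Icc α β, ‖iteratedDeriv n f x‖ ≤ C * ρ ^ n * M n}

/-- Nonquasianalyticity of the Carleman class `C_M{ℝ}`. -/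
def Nonquasianalytic (M : ℕ → ℝ) : Prop :=
  ∃ f₀ ∈ CarlemanClass M, f₀ ≠ 0 ∧ ∃ x₀ : ℝ, ∀ n : ℕ, iteratedDeriv n f₀ x₀ = 0

/-- The standing assumptions on the weight sequence `M` : positivity, nonquasianalyticity
of `C_M{ℝ}`, almost-increasingness of `((M_n/n!)^{1/n})_{n ≥ 1}`, `1 = M_0 ≤ M_1`,
logarithmic convexity of `(M_n/n!)`, `sup_{n ≥ 1} (M_{n+1}/((n+1) M_n))^{1/n} < ∞` and
`liminf (M_n/n!)^{1/n} > 0`. -/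
def StandingAssumptions (M : ℕ → ℝ) : Prop :=
  (∀ n, 0 < M n) ∧ Nonquasianalytic M ∧
  (∃ C : ℝ, 0 < C ∧ ∀ p q : ℕ, 1 ≤ p → p ≤ q →
    (M p / (Nat.factorial p : ℝ)) ^ ((1 : ℝ) / (p : ℝ)) ≤
      C * (M q / (Nat.factorial q : ℝ)) ^ ((1 : ℝ) / (q : ℝ))) ∧
  (M 0 = 1 ∧ M 0 ≤ M 1) ∧
  (∀ n : ℕ, (M (n + 1) / (Nat.factorial (n + 1) : ℝ)) ^ 2 ≤
    (M n / (Nat.factorial n : ℝ)) * (M (n + 2) / (Nat.factorial (n + 2) : ℝ))) ∧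
  (∃ B : ℝ, ∀ n : ℕ, 1 ≤ n →
    (M (n + 1) / (((n : ℝ) + 1) * M n)) ^ ((1 : ℝ) / (n : ℝ)) ≤ B) ∧
  (0 < Filter.liminf (fun n : ℕ => (M n / (Nat.factorial n : ℝ)) ^ ((1 : ℝ) / (n : ℝ)))
    Filter.atTop)

/-!
Nonquasianalyticity yields a cutoff `ψ ∈ C_M{ℝ}` with `0 ≤ ψ ≤ 1`, `ψ = 1` on `(-∞, a]`
and `ψ = 0` on `[b, ∞)`: glue a flat function of the class to zero, square it into a bump
supported in `[a, b]` and integrate. Log-convexity of `M_n / n!` is what makes `C_M{ℝ}` an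
algebra, and `M` increasing makes it closed under primitives.

The defect `e(s) = y(s) - y(s+1) - χ(s)` splits as `eψ + e(1-ψ)`, and
`E(s) = ∑_{k ≥ 0} (eψ)(s+k) - ∑_{k ≥ 0} (e(1-ψ))(s-k-1)` is locally a finite sum, so
`E ∈ C_M{ℝ}` and `E(s) - E(s+1) = e(s)`. Then `z = y - E` solves the equation, and
`‖y(s) - z(s)‖ = ‖E(s)‖` is at most a sum of `⌈(b-s)⁺⌉ + ⌈(s-a)⁺⌉` values of `δ` on
`I_s`; the derivative term of the bound is not even needed.
-/

open Set Topology Complex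
open scoped Nat ContDiff ComplexConjugate

section DerivativeSequence

variable {𝕜 E : Type*} [NontriviallyNormedField 𝕜] [NormedAddCommGroup E] [NormedSpace 𝕜 E]

lemma iteratedDeriv_eq_of_hasDerivAt_succ {h : ℕ → 𝕜 → E}
    (hd : ∀ n x, HasDerivAt (h n) (h (n + 1) x) x) (n : ℕ) : iteratedDeriv n (h 0) = h n := by
  induction n with
  | zero => exact iteratedDeriv_zero
  | succ n ih => rw [iteratedDeriv_succ, ih]; exact funext fun x => (hd n x).deriv

lemma contDiff_of_hasDerivAt_succ {h : ℕ → 𝕜 → E}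
    (hd : ∀ n x, HasDerivAt (h n) (h (n + 1) x) x) : ContDiff 𝕜 ∞ (h 0) :=
  contDiff_of_differentiable_iteratedDeriv fun n _ => by
    rw [iteratedDeriv_eq_of_hasDerivAt_succ hd n]
    exact fun x => (hd n x).differentiableAt

end DerivativeSequence

section Indicator

variable {E : Type*} [NormedAddCommGroup E] [NormedSpace ℝ E] {x₀ : ℝ}

lemma hasDerivAt_indicator_Ici {g g' : ℝ → E} (hg : ∀ x, HasDerivAt g (g' x) x)
    (hg₀ : g x₀ = 0) (hg'₀ : g' x₀ = 0) (x : ℝ) :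
    HasDerivAt ((Ici x₀).indicator g) ((Ici x₀).indicator g' x) x := by
  rcases lt_trichotomy x x₀ with hx | rfl | hx
  · rw [indicator_of_notMem (notMem_Ici.mpr hx)]
    refine (hasDerivAt_const x 0).congr_of_eventuallyEq ?_
    filter_upwards [Iio_mem_nhds hx] with t ht
    exact indicator_of_notMem (notMem_Ici.mpr ht) g
  · rw [indicator_of_mem self_mem_Ici, hg'₀, hasDerivAt_iff_isLittleO]
    have hlo := hasDerivAt_iff_isLittleO.mp (hg x)
    refine (Asymptotics.isBigO_of_le _ fun t => ?_).trans_isLittleO hlo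
    simpa [indicator_of_mem self_mem_Ici, hg₀, hg'₀] using norm_indicator_le_norm_self g t
  · rw [indicator_of_mem (mem_Ici.mpr hx.le)]
    refine (hg x).congr_of_eventuallyEq ?_
    filter_upwards [Ioi_mem_nhds hx] with t ht
    exact indicator_of_mem (mem_Ici.mpr (le_of_lt ht)) g

variable {f : ℝ → E}

lemma hasDerivAt_indicator_Ici_iteratedDeriv (hf : ContDiff ℝ ∞ f)
    (hflat : ∀ n, iteratedDeriv n f x₀ = 0) (n : ℕ) (x : ℝ) :
    HasDerivAt ((Ici x₀).indicator (iteratedDeriv n f))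
      ((Ici x₀).indicator (iteratedDeriv (n + 1) f) x) x := by
  refine hasDerivAt_indicator_Ici (fun x => ?_) (hflat n) (hflat (n + 1)) x
  rw [iteratedDeriv_succ]
  exact ((hf.differentiable_iteratedDeriv n (mod_cast ENat.natCast_lt_top n)) x).hasDerivAt

end Indicator

def IsLogConvexSeq (m : ℕ → ℝ) : Prop := ∀ n, m (n + 1) ^ 2 ≤ m n * m (n + 2)

namespace IsLogConvexSeq

variable {m : ℕ → ℝ}

lemma monotone_ratio (hm : ∀ n, 0 < m n) (h : IsLogConvexSeq m) :
    Monotone fun n => m (n + 1) / m n := by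
  refine monotone_nat_of_le_succ fun n => ?_
  rw [div_le_div_iff₀ (hm n) (hm (n + 1))]
  nlinarith [h n]

lemma mul_le_mul_add (hm : ∀ n, 0 < m n) (h : IsLogConvexSeq m) (i j : ℕ) :
    m i * m j ≤ m 0 * m (i + j) := by
  induction i with
  | zero => simp
  | succ i ih =>
    have hratio := h.monotone_ratio hm (Nat.le_add_right i j)
    rw [div_le_div_iff₀ (hm i) (hm (i + j))] at hratio
    refine le_of_mul_le_mul_left ?_ (hm i)
    calc m i * (m (i + 1) * m j) = m (i + 1) * (m i * m j) := by ring
      _ ≤ m (i + 1) * (m 0 * m (i + j)) := by gcongr; exact (hm _).le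
      _ = m 0 * (m (i + 1) * m (i + j)) := by ring
      _ ≤ m 0 * (m (i + j + 1) * m i) := by gcongr; exact (hm 0).le
      _ = m i * (m 0 * m (i + 1 + j)) := by rw [Nat.add_right_comm]; ring

end IsLogConvexSeq

section Weight

variable {M : ℕ → ℝ}

lemma choose_mul_mul_le (hpos : ∀ n, 0 < M n) (hlc : IsLogConvexSeq fun n => M n / n !)
    {i n : ℕ} (hin : i ≤ n) : n.choose i * M i * M (n - i) ≤ M 0 * M n := by
  have key := hlc.mul_le_mul_add (fun n => div_pos (hpos n) (by positivity)) i (n - i)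
  rw [Nat.add_sub_cancel' hin] at key
  have hfac : (n.choose i : ℝ) * i ! * (n - i)! = n ! := by
    exact_mod_cast Nat.choose_mul_factorial_mul_factorial hin
  have hi : (0 : ℝ) < i ! := by positivity
  have hni : (0 : ℝ) < (n - i)! := by positivity
  calc (n.choose i : ℝ) * M i * M (n - i) = M i / i ! * (M (n - i) / (n - i)!) * n ! := by
        rw [← hfac]; field_simp
    _ ≤ M 0 / (0 : ℕ)! * (M n / n !) * n ! := by gcongr
    _ = M 0 * M n := by field_simp; simp

lemma monotone_of_isLogConvexSeq (hpos : ∀ n, 0 < M n)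
    (hlc : IsLogConvexSeq fun n => M n / n !) (h01 : M 0 ≤ M 1) : Monotone M := by
  refine monotone_nat_of_le_succ fun n => ?_
  have key := choose_mul_mul_le hpos hlc (Nat.le_add_left 1 n)
  simp only [Nat.choose_one_right, Nat.add_sub_cancel] at key
  push_cast at key
  have hn : (1 : ℝ) ≤ n + 1 := by linarith [n.cast_nonneg (α := ℝ)]
  have : M 0 * M n ≤ M 0 * M (n + 1) :=
    calc M 0 * M n ≤ 1 * M 1 * M n := by rw [one_mul]; gcongr; exact (hpos n).le
      _ ≤ (n + 1) * M 1 * M n := by gcongr; exacts [(hpos n).le, (hpos 1).le]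
      _ ≤ M 0 * M (n + 1) := key
  exact le_of_mul_le_mul_left this (hpos 0)

end Weight

namespace CarlemanClass

variable {M : ℕ → ℝ} {f g : ℝ → ℂ}

lemma contDiffAt_of_mem (hf : f ∈ CarlemanClass M) (n : ℕ) (x : ℝ) : ContDiffAt ℝ n f x :=
  (hf.1.of_le (mod_cast le_top)).contDiffAt

lemma add_mem (hM : ∀ n, 0 ≤ M n) (hf : f ∈ CarlemanClass M) (hg : g ∈ CarlemanClass M) :
    f + g ∈ CarlemanClass M := by
  refine ⟨hf.1.add hg.1, fun α β => ?_⟩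
  obtain ⟨C, ρ, hC, hρ, hfB⟩ := hf.2 α β
  obtain ⟨C', ρ', hC', hρ', hgB⟩ := hg.2 α β
  refine ⟨C + C', max ρ ρ', by positivity, lt_max_of_lt_left hρ, fun n x hx => ?_⟩
  have := hM n
  rw [iteratedDeriv_add (contDiffAt_of_mem hf n x) (contDiffAt_of_mem hg n x)]
  calc ‖iteratedDeriv n f x + iteratedDeriv n g x‖
      ≤ C * ρ ^ n * M n + C' * ρ' ^ n * M n := norm_add_le_of_le (hfB n x hx) (hgB n x hx)
    _ ≤ C * max ρ ρ' ^ n * M n + C' * max ρ ρ' ^ n * M n := by gcongr <;> simp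
    _ = (C + C') * max ρ ρ' ^ n * M n := by ring

lemma const_mem (hpos : ∀ n, 0 < M n) (c : ℂ) : (fun _ => c) ∈ CarlemanClass M := by
  have := hpos 0
  refine ⟨contDiff_const, fun _ _ =>
    ⟨‖c‖ / M 0 + 1, 1, by positivity, one_pos, fun n x _ => ?_⟩⟩
  rw [iteratedDeriv_const]
  rcases n with _ | n
  · simp only [if_true, pow_zero, mul_one, add_mul, div_mul_cancel₀ _ this.ne', one_mul]
    linarith
  · simp only [Nat.succ_ne_zero, if_false, norm_zero, one_pow, mul_one]
    exact mul_nonneg (by positivity) (hpos _).le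

lemma mul_mem (hpos : ∀ n, 0 < M n) (hlc : IsLogConvexSeq fun n => M n / n !)
    (hf : f ∈ CarlemanClass M) (hg : g ∈ CarlemanClass M) : f * g ∈ CarlemanClass M := by
  refine ⟨hf.1.mul hg.1, fun α β => ?_⟩
  obtain ⟨C, ρ, hC, hρ, hfB⟩ := hf.2 α β
  obtain ⟨C', ρ', hC', hρ', hgB⟩ := hg.2 α β
  set r := max ρ ρ'
  have hr : 0 < r := lt_max_of_lt_left hρ
  refine ⟨C * C' * M 0, 2 * r, by have := hpos 0; positivity, by positivity, fun n x hx => ?_⟩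
  have hterm : ∀ i ∈ Finset.range (n + 1),
      ‖(n.choose i : ℂ) * iteratedDeriv i f x * iteratedDeriv (n - i) g x‖
        ≤ C * C' * M 0 * r ^ n * M n := by
    intro i hi
    have hin : i ≤ n := Nat.lt_succ_iff.mp (Finset.mem_range.mp hi)
    have := hpos i
    have := hpos (n - i)
    calc ‖(n.choose i : ℂ) * iteratedDeriv i f x * iteratedDeriv (n - i) g x‖
        ≤ n.choose i * (C * ρ ^ i * M i) * (C' * ρ' ^ (n - i) * M (n - i)) := by
          rw [norm_mul, norm_mul, Complex.norm_natCast]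
          gcongr
          exacts [hfB i x hx, hgB (n - i) x hx]
      _ ≤ n.choose i * (C * r ^ i * M i) * (C' * r ^ (n - i) * M (n - i)) := by
          gcongr <;> simp [r]
      _ = C * C' * r ^ (i + (n - i)) * (n.choose i * M i * M (n - i)) := by ring
      _ ≤ C * C' * r ^ n * (M 0 * M n) := by
          rw [Nat.add_sub_cancel' hin]
          exact mul_le_mul_of_nonneg_left (choose_mul_mul_le hpos hlc hin) (by positivity)
      _ = C * C' * M 0 * r ^ n * M n := by ring
  have hcount : (n + 1 : ℝ) ≤ 2 ^ n := mod_cast Nat.lt_two_pow_self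
  have := hpos 0
  have := hpos n
  calc ‖iteratedDeriv n (f * g) x‖
      ≤ ∑ i ∈ Finset.range (n + 1), C * C' * M 0 * r ^ n * M n := by
        rw [iteratedDeriv_mul (contDiffAt_of_mem hf n x) (contDiffAt_of_mem hg n x)]
        exact (norm_sum_le _ _).trans (Finset.sum_le_sum hterm)
    _ = (n + 1) * (C * C' * M 0 * r ^ n * M n) := by simp
    _ ≤ 2 ^ n * (C * C' * M 0 * r ^ n * M n) := by gcongr
    _ = C * C' * M 0 * (2 * r) ^ n * M n := by ring

lemma comp_affine_mem (hM : ∀ n, 0 ≤ M n) (hf : f ∈ CarlemanClass M) (p q : ℝ) :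
    (fun s => f (p * s + q)) ∈ CarlemanClass M := by
  refine ⟨hf.1.comp ((contDiff_const.mul contDiff_id).add contDiff_const), fun α β => ?_⟩
  set u := p * α + q
  set v := p * β + q
  obtain ⟨C, ρ, hC, hρ, hfB⟩ := hf.2 (min u v) (max u v)
  refine ⟨C, ρ * |p| + 1, hC, by positivity, fun n x hx => ?_⟩
  have hmem : p * x + q ∈ Icc (min u v) (max u v) := by
    obtain ⟨hαx, hxβ⟩ := hx
    rcases le_total 0 p with hp | hp
    · exact ⟨min_le_of_left_le (by nlinarith), le_max_of_le_right (by nlinarith)⟩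
    · exact ⟨min_le_of_right_le (by nlinarith), le_max_of_le_left (by nlinarith)⟩
  have := hM n
  have hderiv : iteratedDeriv n (fun s => f (p * s + q)) x
      = p ^ n • iteratedDeriv n f (p * x + q) := by
    have hshift : ContDiff ℝ n fun u => f (u + q) :=
      (hf.1.of_le (mod_cast le_top)).comp (contDiff_id.add contDiff_const)
    rw [congrFun (iteratedDeriv_comp_const_smul hshift p) x,
      congrFun (iteratedDeriv_comp_add_const n f q) (p * x)]
  calc ‖iteratedDeriv n (fun s => f (p * s + q)) x‖
      = |p| ^ n * ‖iteratedDeriv n f (p * x + q)‖ := by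
        rw [hderiv, norm_smul, norm_pow, Real.norm_eq_abs]
    _ ≤ |p| ^ n * (C * ρ ^ n * M n) := by gcongr; exact hfB n _ hmem
    _ = C * (ρ * |p|) ^ n * M n := by ring
    _ ≤ C * (ρ * |p| + 1) ^ n * M n := by gcongr; linarith

lemma translate_mem (hM : ∀ n, 0 ≤ M n) (hf : f ∈ CarlemanClass M) (c : ℝ) :
    (fun s => f (s + c)) ∈ CarlemanClass M := by
  simpa using comp_affine_mem hM hf 1 c

lemma conj_mem (hf : f ∈ CarlemanClass M) : (fun t => conj (f t)) ∈ CarlemanClass M := by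
  refine ⟨Complex.conjCLE.contDiff.comp hf.1, fun α β => ?_⟩
  obtain ⟨C, ρ, hC, hρ, hfB⟩ := hf.2 α β
  refine ⟨C, ρ, hC, hρ, fun n x hx => ?_⟩
  rw [← norm_iteratedFDeriv_eq_norm_iteratedDeriv]
  exact (Complex.conjLIE.norm_iteratedFDeriv_comp_left f x n).trans_le
    ((norm_iteratedFDeriv_eq_norm_iteratedDeriv).trans_le (hfB n x hx))

lemma mem_of_eventuallyEq (h : ∀ α β, ∃ g ∈ CarlemanClass M, f =ᶠ[𝓝ˢ (Icc α β)] g) :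
    f ∈ CarlemanClass M := by
  refine ⟨contDiff_iff_contDiffAt.mpr fun x => ?_, fun α β => ?_⟩
  · obtain ⟨g, hg, hfg⟩ := h x x
    exact hg.1.contDiffAt.congr_of_eventuallyEq
      (hfg.filter_mono (nhds_le_nhdsSet ⟨le_rfl, le_rfl⟩))
  · obtain ⟨g, hg, hfg⟩ := h α β
    obtain ⟨C, ρ, hC, hρ, hgB⟩ := hg.2 α β
    refine ⟨C, ρ, hC, hρ, fun n x hx => ?_⟩
    rw [((hfg.filter_mono (nhds_le_nhdsSet hx)).iteratedDeriv n).eq_of_nhds]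
    exact hgB n x hx

lemma mem_of_hasDerivAt (hM₀ : 0 < M 0) (hmono : Monotone M) {f' : ℝ → ℂ}
    (hf' : f' ∈ CarlemanClass M) (hf : ∀ x, HasDerivAt f (f' x) x) : f ∈ CarlemanClass M := by
  have hderiv : deriv f = f' := funext fun x => (hf x).deriv
  have hsmooth : ContDiff ℝ ∞ f :=
    contDiff_infty_iff_deriv.mpr ⟨fun x => (hf x).differentiableAt, hderiv ▸ hf'.1⟩
  refine ⟨hsmooth, fun α β => ?_⟩
  obtain ⟨K, hK⟩ := (isCompact_Icc (a := α) (b := β)).exists_bound_of_continuousOn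
    hsmooth.continuous.continuousOn
  obtain ⟨C, ρ, hC, hρ, hB⟩ := hf'.2 α β
  have hMpos : ∀ n, 0 < M n := fun n => hM₀.trans_le (hmono n.zero_le)
  refine ⟨max K 0 / M 0 + C, max ρ 1, by positivity, by positivity, fun n x hx => ?_⟩
  rcases n with _ | n
  · calc ‖iteratedDeriv 0 f x‖ ≤ max K 0 := by
          rw [iteratedDeriv_zero]; exact (hK x hx).trans (le_max_left _ _)
      _ ≤ max K 0 + C * M 0 := le_add_of_nonneg_right (by positivity)
      _ = (max K 0 / M 0 + C) * max ρ 1 ^ 0 * M 0 := by field_simp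
  · have := hMpos n
    calc ‖iteratedDeriv (n + 1) f x‖ ≤ C * ρ ^ n * M n := by
          rw [iteratedDeriv_succ', hderiv]; exact hB n x hx
      _ ≤ (max K 0 / M 0 + C) * max ρ 1 ^ (n + 1) * M (n + 1) := by
          gcongr
          · exact le_add_of_nonneg_left (by positivity)
          · calc ρ ^ n ≤ max ρ 1 ^ n := by gcongr; exact le_max_left _ _
              _ ≤ max ρ 1 ^ (n + 1) := pow_le_pow_right₀ (le_max_right _ _) n.le_succ
          · exact hmono n.le_succ

lemma indicator_Ici_mem (hf : f ∈ CarlemanClass M) {x₀ : ℝ}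
    (hflat : ∀ n, iteratedDeriv n f x₀ = 0) : (Ici x₀).indicator f ∈ CarlemanClass M := by
  have hd := hasDerivAt_indicator_Ici_iteratedDeriv hf.1 hflat
  have hiter := iteratedDeriv_eq_of_hasDerivAt_succ hd
  have hsmooth := contDiff_of_hasDerivAt_succ hd
  simp only [iteratedDeriv_zero] at hiter hsmooth
  refine ⟨hsmooth, fun α β => ?_⟩
  obtain ⟨C, ρ, hC, hρ, hB⟩ := hf.2 α β
  refine ⟨C, ρ, hC, hρ, fun n x hx => ?_⟩
  rw [hiter n]
  exact norm_indicator_le_norm_self _ x |>.trans (hB n x hx)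

end CarlemanClass

def carlemanSubalgebra (M : ℕ → ℝ) (hpos : ∀ n, 0 < M n)
    (hlc : IsLogConvexSeq fun n => M n / n !) : Subalgebra ℂ (ℝ → ℂ) where
  carrier := CarlemanClass M
  mul_mem' := CarlemanClass.mul_mem hpos hlc
  one_mem' := CarlemanClass.const_mem hpos 1
  add_mem' := CarlemanClass.add_mem fun n => (hpos n).le
  zero_mem' := CarlemanClass.const_mem hpos 0
  algebraMap_mem' := CarlemanClass.const_mem hpos



section Cutoff

variable {M : ℕ → ℝ}

lemma Nonquasianalytic.exists_mem_eq_zero_of_nonpos (hM : ∀ n, 0 ≤ M n)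
    (hNQ : Nonquasianalytic M) :
    ∃ g ∈ CarlemanClass M, (∀ t ≤ 0, g t = 0) ∧ g 1 ≠ 0 := by
  obtain ⟨f₀, hf₀, hne, x₀, hflat⟩ := hNQ
  obtain ⟨x₁, hx₁⟩ := Function.ne_iff.mp hne
  set f₁ : ℝ → ℂ := fun t => f₀ ((x₁ - x₀) * t + x₀)
  have hf₁flat : ∀ n, iteratedDeriv n f₁ 0 = 0 := fun n => by
    have hshift : ContDiff ℝ n fun u => f₀ (u + x₀) :=
      (hf₀.1.of_le (mod_cast le_top)).comp (contDiff_id.add contDiff_const)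
    rw [congrFun (iteratedDeriv_comp_const_smul hshift _) 0,
      congrFun (iteratedDeriv_comp_add_const n f₀ x₀)]
    simp [hflat n]
  refine ⟨(Ici 0).indicator f₁,
    CarlemanClass.indicator_Ici_mem (CarlemanClass.comp_affine_mem hM hf₀ _ _) hf₁flat,
    fun t ht => ?_, ?_⟩
  · rcases ht.lt_or_eq with ht | rfl
    · exact indicator_of_notMem (notMem_Ici.mpr ht) f₁
    · simpa [f₁] using hflat 0
  · simpa [f₁] using hx₁

lemma Nonquasianalytic.exists_bump (hpos : ∀ n, 0 < M n)
    (hlc : IsLogConvexSeq fun n => M n / n !) (hNQ : Nonquasianalytic M) {a b : ℝ} (hab : a < b) :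
    ∃ β : ℝ → ℝ, (fun t => (β t : ℂ)) ∈ CarlemanClass M ∧ (∀ t, 0 ≤ β t) ∧
      (∀ t ≤ a, β t = 0) ∧ (∀ t, b ≤ t → β t = 0) ∧ 0 < β ((a + b) / 2) := by
  have hM : ∀ n, 0 ≤ M n := fun n => (hpos n).le
  set S := carlemanSubalgebra M hpos hlc
  obtain ⟨g, hg, hg0, hg1⟩ := hNQ.exists_mem_eq_zero_of_nonpos hM
  set B : ℝ → ℝ := fun u => normSq (g u) * normSq (g (-1 * u + 2))
  have hB : (fun u => (B u : ℂ)) ∈ S := by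
    have hsq : (fun u => (normSq (g u) : ℂ)) ∈ S := by
      simp_rw [← Complex.mul_conj]
      exact S.mul_mem hg (CarlemanClass.conj_mem hg)
    simp only [B, ofReal_mul]
    exact S.mul_mem hsq (CarlemanClass.comp_affine_mem hM hsq (-1) 2)
  have hB0 : ∀ u, u ≤ 0 ∨ 2 ≤ u → B u = 0 := by
    rintro u (hu | hu)
    · simp [B, hg0 u hu]
    · simp [B, hg0 (-u + 2) (by linarith)]
  set p := 2 / (b - a)
  have hp : p * (b - a) = 2 := div_mul_cancel₀ _ (sub_ne_zero.mpr hab.ne')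
  have hp0 : 0 < p := div_pos two_pos (sub_pos.mpr hab)
  refine ⟨fun t => B (p * t + -(p * a)), CarlemanClass.comp_affine_mem hM hB _ _,
    fun t => mul_nonneg (normSq_nonneg _) (normSq_nonneg _), fun t ht => hB0 _ (.inl ?_),
    fun t ht => hB0 _ (.inr ?_), ?_⟩
  · nlinarith
  · nlinarith
  · have h1 : p * ((a + b) / 2) + -(p * a) = 1 := by linear_combination hp / 2
    simp only [B, h1]
    have := normSq_pos.mpr hg1
    norm_num
    positivity

lemma Nonquasianalytic.exists_cutoff (hpos : ∀ n, 0 < M n)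
    (hlc : IsLogConvexSeq fun n => M n / n !) (h01 : M 0 ≤ M 1) (hNQ : Nonquasianalytic M)
    {a b : ℝ} (hab : a < b) :
    ∃ ψ : ℝ → ℝ, (fun t => (ψ t : ℂ)) ∈ CarlemanClass M ∧ (∀ x, ψ x ∈ Icc 0 1) ∧
      (∀ x ≤ a, ψ x = 1) ∧ (∀ x, b ≤ x → ψ x = 0) := by
  obtain ⟨β, hβ, hβ0, hβa, hβb, hβmid⟩ := hNQ.exists_bump hpos hlc hab
  have hβc : Continuous β := by
    simpa [Function.comp_def] using continuous_re.comp hβ.1.continuous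
  have hzero : ∀ x y, EqOn β 0 (uIcc x y) → ∫ t in x..y, β t = 0 := fun x y h => by
    rw [intervalIntegral.integral_congr h]; simp
  set Φ : ℝ → ℝ := fun x => ∫ t in a..x, β t
  have hc : 0 < Φ b := intervalIntegral.integral_pos hab hβc.continuousOn (fun t _ => hβ0 t)
    ⟨(a + b) / 2, ⟨by linarith, by linarith⟩, hβmid⟩
  have hΦa : ∀ x ≤ a, Φ x = 0 := fun x hx => hzero a x fun t ht => hβa t <| by
    rw [uIcc_of_ge hx] at ht; exact ht.2
  have hΦb : ∀ x, b ≤ x → Φ x = Φ b := fun x hx => by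
    simp only [Φ]
    rw [← intervalIntegral.integral_add_adjacent_intervals (hβc.intervalIntegrable a b)
      (hβc.intervalIntegrable b x), add_eq_left]
    exact hzero b x fun t ht => hβb t (by rw [uIcc_of_le hx] at ht; exact ht.1)
  have hΦ : ∀ x, Φ x ∈ Icc 0 (Φ b) := fun x => by
    rcases le_total x a with hxa | hax
    · simp [hΦa x hxa, hc.le]
    rcases le_total b x with hbx | hxb
    · simp [hΦb x hbx, hc.le]
    exact ⟨intervalIntegral.integral_nonneg hax fun t _ => hβ0 t,
      intervalIntegral.integral_mono_interval le_rfl hax hxb (.of_forall hβ0)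
        (hβc.intervalIntegrable a b)⟩
  set S := carlemanSubalgebra M hpos hlc
  have hderiv : ∀ x, HasDerivAt (fun t => ((1 - Φ t / Φ b : ℝ) : ℂ))
      (((-(Φ b : ℂ)⁻¹) • fun t => (β t : ℂ)) x) x := fun x => by
    convert ((hβc.integral_hasStrictDerivAt a x).hasDerivAt.div_const (Φ b)).const_sub 1
      |>.ofReal_comp using 1
    simp only [Pi.smul_apply, smul_eq_mul]
    push_cast
    ring
  refine ⟨fun x => 1 - Φ x / Φ b, CarlemanClass.mem_of_hasDerivAt (hpos 0)
    (monotone_of_isLogConvexSeq hpos hlc h01) (S.smul_mem hβ _) hderiv, fun x => ?_,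
    fun x hx => by simp [hΦa x hx], fun x hx => by simp [hΦb x hx, hc.ne']⟩
  obtain ⟨h0, h1⟩ := hΦ x
  constructor
  · rw [sub_nonneg, div_le_one hc]; exact h1
  · rw [sub_le_self_iff]; positivity

end Cutoff

section ForwardSum

variable {E : Type*} [NormedAddCommGroup E] {F : ℝ → E} {b : ℝ}

noncomputable def forwardSum (F : ℝ → E) (s : ℝ) : E := ∑' k : ℕ, F (s + k)

lemma forwardSum_eq_sum (hF : ∀ t, b ≤ t → F t = 0) {s : ℝ} {N : ℕ} (hN : b ≤ s + N) :
    forwardSum F s = ∑ k ∈ Finset.range N, F (s + k) :=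
  tsum_eq_sum fun k hk => hF _ <| hN.trans <| by
    gcongr; exact_mod_cast not_lt.mp (Finset.mem_range.not.mp hk)

lemma forwardSum_sub_forwardSum_add_one (hF : ∀ t, b ≤ t → F t = 0) (s : ℝ) :
    forwardSum F s - forwardSum F (s + 1) = F s := by
  obtain ⟨N, hN⟩ := exists_nat_ge (b - s)
  rw [forwardSum_eq_sum hF (N := N + 1) (by push_cast; linarith),
    forwardSum_eq_sum hF (N := N) (by linarith), Finset.sum_range_succ']
  simp only [Nat.cast_succ, Nat.cast_zero, add_zero, ← add_assoc, add_right_comm s _ (1 : ℝ)]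
  abel

lemma CarlemanClass.forwardSum_mem {M : ℕ → ℝ} (hpos : ∀ n, 0 < M n)
    (hlc : IsLogConvexSeq fun n => M n / n !) {F : ℝ → ℂ} (hF : F ∈ CarlemanClass M)
    (hFb : ∀ t, b ≤ t → F t = 0) : forwardSum F ∈ CarlemanClass M := by
  refine CarlemanClass.mem_of_eventuallyEq fun α β => ?_
  obtain ⟨N, hN⟩ := exists_nat_ge (b - α + 1)
  refine ⟨∑ k ∈ Finset.range N, fun s => F (s + k),
    (carlemanSubalgebra M hpos hlc).sum_mem fun k _ =>
      CarlemanClass.translate_mem (fun n => (hpos n).le) hF k, ?_⟩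
  have hnhds : Ioi (α - 1) ∈ 𝓝ˢ (Icc α β) :=
    isOpen_Ioi.mem_nhdsSet.mpr fun x hx => by simp only [mem_Ioi]; linarith [hx.1]
  filter_upwards [hnhds] with s hs
  rw [Finset.sum_apply, forwardSum_eq_sum hFb (by linarith [mem_Ioi.mp hs])]

end ForwardSum

theorem Nonquasianalytic.exists_sub_shift_eq {M : ℕ → ℝ} (hpos : ∀ n, 0 < M n)
    (hlc : IsLogConvexSeq fun n => M n / n !) (h01 : M 0 ≤ M 1) (hNQ : Nonquasianalytic M)
    {a b : ℝ} (hab : a < b) {e : ℝ → ℂ} (he : e ∈ CarlemanClass M) :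
    ∃ E ∈ CarlemanClass M, (∀ s, E s - E (s + 1) = e s) ∧
      ∀ s (N N' : ℕ), b ≤ s + N → s - N' ≤ a →
        ‖E s‖ ≤ ∑ k ∈ Finset.range N, ‖e (s + k)‖ +
          ∑ k ∈ Finset.range N', ‖e (s - (k + 1))‖ := by
  have hM : ∀ n, 0 ≤ M n := fun n => (hpos n).le
  set S := carlemanSubalgebra M hpos hlc
  obtain ⟨ψ, hψ, hψ01, hψa, hψb⟩ := hNQ.exists_cutoff hpos hlc h01 hab
  have hψn : ∀ t, ‖(ψ t : ℂ)‖ ≤ 1 ∧ ‖1 - (ψ t : ℂ)‖ ≤ 1 := fun t => by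
    obtain ⟨h0, h1⟩ := hψ01 t
    rw [← ofReal_one, ← ofReal_sub, norm_real, norm_real, Real.norm_of_nonneg h0,
      Real.norm_of_nonneg (by linarith)]
    constructor <;> linarith
  -- `G` is `e (1 - ψ)` reflected, so that both halves of `e` are summed forward.
  set F : ℝ → ℂ := fun t => e t * ψ t
  set G : ℝ → ℂ := fun t => e (-t - 1) * (1 - ψ (-t - 1))
  have hF : F ∈ CarlemanClass M := S.mul_mem he hψ
  have hG : G ∈ CarlemanClass M := by
    convert CarlemanClass.comp_affine_mem hM (S.mul_mem he (S.sub_mem S.one_mem hψ)) (-1) (-1)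
      using 1
    funext t
    simp only [G, Pi.mul_apply, Pi.sub_apply, Pi.one_apply]
    ring_nf
  have hFb : ∀ t, b ≤ t → F t = 0 := fun t ht => by simp [F, hψb t ht]
  have hGb : ∀ t, -a - 1 ≤ t → G t = 0 := fun t ht => by simp [G, hψa (-t - 1) (by linarith)]
  have hGrefl : (fun s => forwardSum G (-s)) ∈ CarlemanClass M := by
    simpa using CarlemanClass.comp_affine_mem hM (CarlemanClass.forwardSum_mem hpos hlc hG hGb)
      (-1) 0
  refine ⟨forwardSum F - fun s => forwardSum G (-s),
    S.sub_mem (CarlemanClass.forwardSum_mem hpos hlc hF hFb) hGrefl, fun s => ?_,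
    fun s N N' hN hN' => ?_⟩
  · have hGs := forwardSum_sub_forwardSum_add_one hGb (-(s + 1))
    rw [show -(s + 1) + 1 = -s by ring, show G (-(s + 1)) = e s * (1 - ψ s) by simp [G]] at hGs
    simp only [Pi.sub_apply]
    linear_combination forwardSum_sub_forwardSum_add_one hFb s + hGs
  · simp only [Pi.sub_apply]
    rw [forwardSum_eq_sum hFb hN, forwardSum_eq_sum hGb (N := N') (by linarith)]
    refine (norm_sub_le _ _).trans (add_le_add
      ((norm_sum_le _ _).trans (Finset.sum_le_sum fun k _ => ?_))
      ((norm_sum_le _ _).trans (Finset.sum_le_sum fun k _ => ?_)))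
    · simpa [F] using mul_le_of_le_one_right (norm_nonneg (e (s + k))) (hψn (s + k)).1
    · have hk : G (-s + k) = e (s - (k + 1)) * (1 - ψ (s - (k + 1))) := by
        simp only [G, show -(-s + k) - 1 = s - (k + 1) by ring]
      rw [hk, norm_mul]
      exact mul_le_of_le_one_right (norm_nonneg _) (hψn _).2

lemma sum_shifts_le_mul_sSup {δ : ℝ → ℝ} {s : ℝ} {N N' : ℕ}
    (hδ : BddAbove (δ '' Icc (s - N') (s + N - 1))) :
    ∑ k ∈ Finset.range N, δ (s + k) + ∑ k ∈ Finset.range N', δ (s - (k + 1)) ≤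
      (N + N') * sSup (δ '' Icc (s - N') (s + N - 1)) := by
  have hle : ∀ t ∈ Icc (s - N') (s + N - 1), δ t ≤ sSup (δ '' Icc (s - N') (s + N - 1)) :=
    fun t ht => le_csSup hδ (mem_image_of_mem δ ht)
  have hrange : ∀ {k n : ℕ}, k ∈ Finset.range n → (0 : ℝ) ≤ k ∧ (k : ℝ) + 1 ≤ n :=
    fun {k _} hk => ⟨k.cast_nonneg, by exact_mod_cast Finset.mem_range.mp hk⟩
  have hN : (0 : ℝ) ≤ N := N.cast_nonneg
  have hN' : (0 : ℝ) ≤ N' := N'.cast_nonneg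
  have hforward := Finset.sum_le_card_nsmul (Finset.range N) (fun k : ℕ => δ (s + k)) _
    fun k hk => hle _ ⟨by linarith [hrange hk], by linarith [hrange hk]⟩
  have hbackward := Finset.sum_le_card_nsmul (Finset.range N') (fun k : ℕ => δ (s - (k + 1))) _
    fun k hk => hle _ ⟨by linarith [hrange hk], by linarith [hrange hk]⟩
  simp only [Finset.card_range, nsmul_eq_mul] at hforward hbackward
  linarith

theorem ggs_difference_equation_C1_general
    (a b : ℝ) (hab : a < b) (M : ℕ → ℝ) (hM : StandingAssumptions M)
    (χ : ℝ → ℂ) (hχM : χ ∈ CarlemanClass M)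
    (y : ℝ → ℂ) (hy : y ∈ CarlemanClass M)
    (δ : ℝ → ℝ) (hδC1 : ContDiff ℝ 1 δ)
    (hyδ : ∀ s : ℝ, ‖y s - y (s + 1) - χ s‖ ≤ δ s) :
    ∃ z ∈ CarlemanClass M, (∀ s : ℝ, z s - z (s + 1) = χ s) ∧
      ∀ s : ℝ, ‖y s - z s‖ ≤
        ((⌈max (b - s) 0⌉ + ⌈max (s - a) 0⌉ : ℤ) : ℝ) *
          sSup (δ '' Set.Icc (s - (⌈max (s - a) 0⌉ : ℝ)) (s + (⌈max (b - s) 0⌉ : ℝ) - 1)) +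
        (((⌈max (b - s) 0⌉ + ⌈max (s - a) 0⌉ : ℤ) : ℝ) - 1) / 2 *
          sSup ((fun u => |deriv δ u|) ''
            Set.Icc (s - (⌈max (s - a) 0⌉ : ℝ)) (s + (⌈max (b - s) 0⌉ : ℝ) - 1)) := by
  obtain ⟨hpos, hNQ, -, ⟨-, h01⟩, hlc, -, -⟩ := hM
  set S := carlemanSubalgebra M hpos hlc
  have he : (fun s => y s - y (s + 1) - χ s) ∈ S :=
    S.sub_mem (S.sub_mem hy (CarlemanClass.translate_mem (fun n => (hpos n).le) hy 1)) hχM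
  obtain ⟨E, hE, hEe, hEle⟩ := hNQ.exists_sub_shift_eq hpos hlc h01 hab he
  refine ⟨y - E, S.sub_mem hy hE, fun s => ?_, fun s => ?_⟩
  · simp only [Pi.sub_apply]
    linear_combination -hEe s
  set N := ⌈max (b - s) 0⌉₊
  set N' := ⌈max (s - a) 0⌉₊
  have hN : b - s ≤ N := (le_max_left _ _).trans (Nat.le_ceil _)
  have hN' : s - a ≤ N' := (le_max_left _ _).trans (Nat.le_ceil _)
  have hNN' : (1 : ℝ) ≤ N + N' := by
    have : 0 < N + N' := by exact_mod_cast (by linarith : (0 : ℝ) < N + N')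
    exact_mod_cast this
  simp only [Int.cast_add, ← natCast_ceil_eq_intCast_ceil (le_max_right _ (0 : ℝ))]
  calc ‖y s - (y - E) s‖ = ‖E s‖ := by simp
    _ ≤ ∑ k ∈ Finset.range N, δ (s + k) + ∑ k ∈ Finset.range N', δ (s - (k + 1)) :=
        (hEle s N N' (by linarith) (by linarith)).trans
          (add_le_add (Finset.sum_le_sum fun k _ => hyδ _) (Finset.sum_le_sum fun k _ => hyδ _))
    _ ≤ (N + N') * sSup (δ '' Icc (s - N') (s + N - 1)) :=
        sum_shifts_le_mul_sSup (isCompact_Icc.image hδC1.continuous).bddAbove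
    _ ≤ _ := le_add_of_nonneg_right <| mul_nonneg (by linarith) <|
        Real.sSup_nonneg <| forall_mem_image.mpr fun _ _ => abs_nonneg _

/-- Generalized Găvruța stability of the difference equation `f(s) - f(s+1) = χ(s)` with a
`C¹` control function `δ`, with the improved Euler–Maclaurin error bound. -/
theorem ggs_difference_equation_C1
    (a b : ℝ) (hab : a < b) (M : ℕ → ℝ) (hM : StandingAssumptions M)
    (χ : ℝ → ℂ) (hχM : χ ∈ CarlemanClass M)
    (y : ℝ → ℂ) (hy : y ∈ CarlemanClass M)
    (δ : ℝ → ℝ) (hδ : ∀ s : ℝ, 0 ≤ δ s) (hδC1 : ContDiff ℝ 1 δ)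
    (hyδ : ∀ s : ℝ, ‖y s - y (s + 1) - χ s‖ ≤ δ s) :
    ∃ z ∈ CarlemanClass M, (∀ s : ℝ, z s - z (s + 1) = χ s) ∧
      ∀ s : ℝ, ‖y s - z s‖ ≤
        ((⌈max (b - s) 0⌉ + ⌈max (s - a) 0⌉ : ℤ) : ℝ) *
          sSup (δ '' Set.Icc (s - (⌈max (s - a) 0⌉ : ℝ)) (s + (⌈max (b - s) 0⌉ : ℝ) - 1)) +
        (((⌈max (b - s) 0⌉ + ⌈max (s - a) 0⌉ : ℤ) : ℝ) - 1) / 2 *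
          sSup ((fun u => |deriv δ u|) ''
            Set.Icc (s - (⌈max (s - a) 0⌉ : ℝ)) (s + (⌈max (b - s) 0⌉ : ℝ) - 1)) :=
  ggs_difference_equation_C1_general a b hab M hM χ hχM y hy δ hδC1 hyδ
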